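/- For reals c > 0, n > c, integers ρ ≥ 1, j ≥ 1, and t ≥ 0: ∫_0^t [μ_{n,j,ρ}(u) − μ_{n,j+1,ρ}(u)] du = Σ_{i=0}^{ρ−1} p_{nρ+c, i+jρ}(t), where μ_{n,j,ρ}(u) = (c^{jρ}/B(jρ, nρ/c + 1)) u^{jρ−1}(1+cu)^{−(n/c+j)ρ−1} and p_{m,i}(t) = ((Π_{l=0}^{i−1}(m+cl))/i!) t^i (1+ct)^{−(m/c + i)}. -/

import Mathlib

open Finset
open scoped Nat

/-!
Write `p_{m,k}` for `baskakov c m k`. With `m = nρ + c`, the Beta-type density `μ_{n,j,ρ}`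
is `m · p_{m+c, jρ-1}`, and the Baskakov basis satisfies
`p'_{m,k+1} = m (p_{m+c,k} - p_{m+c,k+1})`. Hence the integrand
`m (p_{m+c,jρ-1} - p_{m+c,(j+1)ρ-1})` telescopes into the derivative of `∑_{i<ρ} p_{m,i+jρ}`,
which vanishes at `0`.
-/

noncomputable def baskakov (c m : ℝ) (k : ℕ) (x : ℝ) : ℝ :=
  (∏ l ∈ range k, (m + c * l)) / k ! * x ^ k * (1 + c * x) ^ (-(m / c + k))

section Baskakov

variable {c : ℝ}

lemma prod_range_succ_add_mul (m c : ℝ) (k : ℕ) :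
    ∏ l ∈ range (k + 1), (m + c * l) = m * ∏ l ∈ range k, (m + c + c * l) := by
  rw [prod_range_succ', mul_comm]
  push_cast
  simp only [mul_add, mul_one, add_assoc, add_comm (c * _) c, mul_zero, add_zero]

lemma mul_baskakov_add (hc : c ≠ 0) (m : ℝ) (k : ℕ) (x : ℝ) :
    m * baskakov c (m + c) k x =
      (∏ l ∈ range (k + 1), (m + c * l)) / k ! * x ^ k * (1 + c * x) ^ (-(m / c + (k + 1))) := by
  have hexp : (m + c) / c + k = m / c + (k + 1) := by field_simp; ring
  rw [baskakov, hexp, prod_range_succ_add_mul]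
  ring

@[simp]
lemma baskakov_succ_zero (m : ℝ) (k : ℕ) : baskakov c m (k + 1) 0 = 0 := by
  simp [baskakov]

lemma continuousAt_baskakov (m : ℝ) (k : ℕ) {x : ℝ} (hx : 1 + c * x ≠ 0) :
    ContinuousAt (baskakov c m k) x := by
  unfold baskakov
  fun_prop (disch := exact Or.inl hx)

theorem hasDerivAt_baskakov_succ (hc : c ≠ 0) (m : ℝ) (k : ℕ) {x : ℝ} (hx : 0 < 1 + c * x) :
    HasDerivAt (baskakov c m (k + 1))
      (m * (baskakov c (m + c) k x - baskakov c (m + c) (k + 1) x)) x := by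
  set P := ∏ l ∈ range (k + 1), (m + c * l)
  set r := m / c + (k + 1)
  have hfun :
      baskakov c m (k + 1) = fun y => P / (k + 1)! * y ^ (k + 1) * (1 + c * y) ^ (-r) := by
    ext y; simp only [baskakov, r]; push_cast; rfl
  have hlin : HasDerivAt (fun y => 1 + c * y) c x := by
    simpa using ((hasDerivAt_id x).const_mul c).const_add 1
  have hderiv := (((hasDerivAt_pow (k + 1) x).const_mul (P / (k + 1)!)).fun_mul
    (hlin.rpow_const (p := -r) (Or.inl hx.ne')))
  have hPsucc : ∏ l ∈ range (k + 1 + 1), (m + c * l) = P * (m + c * (k + 1)) := by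
    rw [prod_range_succ]; push_cast; rfl
  have hrc : r * c = m + c * (k + 1) := by simp only [r]; field_simp
  have hpow : (1 + c * x) ^ (-r) = (1 + c * x) ^ (-r - 1) * (1 + c * x) := by
    rw [Real.rpow_sub_one hx.ne']; field_simp
  rw [mul_sub, mul_baskakov_add hc, mul_baskakov_add hc, hPsucc, hfun]
  refine hderiv.congr_deriv ?_
  have hexp : -(m / c + ((k + 1 : ℕ) + 1 : ℝ)) = -r - 1 := by simp only [r]; push_cast; ring
  rw [hexp, hpow, Nat.add_sub_cancel, Nat.factorial_succ, ← hrc]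
  simp only [P, r]
  field_simp
  push_cast
  ring

theorem hasDerivAt_sum_baskakov (hc : c ≠ 0) (m : ℝ) (k r : ℕ) {x : ℝ} (hx : 0 < 1 + c * x) :
    HasDerivAt (fun y => ∑ i ∈ range r, baskakov c m (k + i + 1) y)
      (m * (baskakov c (m + c) k x - baskakov c (m + c) (k + r) x)) x := by
  have h := HasDerivAt.fun_sum (u := range r) fun i _ => hasDerivAt_baskakov_succ hc m (k + i) hx
  refine h.congr_deriv ?_
  rw [← mul_sum]
  exact congrArg (m * ·) (sum_range_sub' (fun i => baskakov c (m + c) (k + i) x) r)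

lemma one_add_mul_pos_of_mem_uIcc {t u : ℝ} (ht : 0 < 1 + c * t) (hu : u ∈ Set.uIcc 0 t) :
    0 < 1 + c * u := by
  rcases Set.mem_uIcc.mp hu with ⟨h0, h1⟩ | ⟨h0, h1⟩ <;>
  rcases le_total 0 c with hc | hc <;> nlinarith

theorem integral_mul_sub_baskakov (hc : c ≠ 0) (m : ℝ) (k r : ℕ) {t : ℝ} (ht : 0 < 1 + c * t) :
    ∫ u in (0 : ℝ)..t, m * (baskakov c (m + c) k u - baskakov c (m + c) (k + r) u) =
      ∑ i ∈ range r, baskakov c m (k + i + 1) t := by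
  have hpos : ∀ u ∈ Set.uIcc 0 t, 0 < 1 + c * u := fun u hu => one_add_mul_pos_of_mem_uIcc ht hu
  have hcont : ContinuousOn
      (fun u => m * (baskakov c (m + c) k u - baskakov c (m + c) (k + r) u)) (Set.uIcc 0 t) :=
    fun u hu => ContinuousAt.continuousWithinAt <| continuousAt_const.mul <|
      (continuousAt_baskakov _ _ (hpos u hu).ne').sub (continuousAt_baskakov _ _ (hpos u hu).ne')
  rw [intervalIntegral.integral_eq_sub_of_hasDerivAt
    (fun u hu => hasDerivAt_sum_baskakov hc m k r (hpos u hu)) hcont.intervalIntegrable]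
  simp

end Baskakov

lemma Real.Gamma_add_nat_eq_mul_prod {s : ℝ} (hs : 0 < s) (k : ℕ) :
    Real.Gamma (s + k) = Real.Gamma s * ∏ l ∈ range k, (s + l) := by
  induction k with
  | zero => simp
  | succ k ih =>
    rw [Nat.cast_succ, ← add_assoc, Real.Gamma_add_one (by positivity), ih, prod_range_succ]
    ring

theorem pow_div_beta_mul_eq_mul_baskakov {c s : ℝ} (hc : c ≠ 0) (hs : 0 < s) {N : ℕ} (hN : N ≠ 0)
    (x : ℝ) :
    c ^ N / (Real.Gamma N * Real.Gamma s / Real.Gamma (N + s)) * x ^ (N - 1) *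
        (1 + c * x) ^ (-(s + N)) =
      c * s * baskakov c (c * s + c) (N - 1) x := by
  obtain ⟨k, rfl⟩ := Nat.exists_eq_succ_of_ne_zero hN
  have hprod :
      ∏ l ∈ range (k + 1), (c * s + c * l) = c ^ (k + 1) * ∏ l ∈ range (k + 1), (s + l) := by
    simp only [← mul_add, prod_mul_distrib, prod_const, card_range]
  have hΓ := (Real.Gamma_pos_of_pos hs).ne'
  have hP : ∏ l ∈ range (k + 1), (s + l) ≠ 0 := prod_ne_zero_iff.mpr fun l _ => by positivity
  rw [Nat.succ_sub_one, mul_baskakov_add hc, hprod, mul_div_cancel_left₀ s hc, add_comm _ s,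
    Real.Gamma_add_nat_eq_mul_prod hs, Nat.cast_succ, Real.Gamma_nat_eq_factorial]
  field_simp

/-- Lemma 2 (c > 0, j ≥ 1): the difference of incomplete Beta-type integrals equals
a block sum of Baskakov basis functions.  Here B(x,y) = Γ(x)Γ(y)/Γ(x+y). -/
theorem stmt_5 (c n : ℝ) (hc : 0 < c) (hn : c < n) (ρ j : ℕ) (hρ : 1 ≤ ρ) (hj : 1 ≤ j)
    (t : ℝ) (ht : 0 ≤ t) :
    (∫ u in (0:ℝ)..t,
      ((c ^ (j * ρ) /
          (Real.Gamma (↑(j * ρ)) * Real.Gamma (n * ρ / c + 1) /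
            Real.Gamma (↑(j * ρ) + n * ρ / c + 1))) *
        u ^ (j * ρ - 1) * (1 + c * u) ^ (-((n / c + j) * (ρ : ℝ) + 1))
      - (c ^ ((j + 1) * ρ) /
          (Real.Gamma (↑((j + 1) * ρ)) * Real.Gamma (n * ρ / c + 1) /
            Real.Gamma (↑((j + 1) * ρ) + n * ρ / c + 1))) *
        u ^ ((j + 1) * ρ - 1) * (1 + c * u) ^ (-((n / c + (j + 1)) * (ρ : ℝ) + 1)))) =
    ∑ i ∈ Finset.range ρ,
      ((∏ l ∈ Finset.range (i + j * ρ), (n * ρ + c + c * l)) /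
          (Nat.factorial (i + j * ρ) : ℝ)) *
        t ^ (i + j * ρ) * (1 + c * t) ^ (-((n * ρ + c) / c + (↑(i + j * ρ) : ℝ))) := by
  have hs : 0 < n * ρ / c + 1 := by have := hc.trans hn; positivity
  have hcs : c * (n * ρ / c + 1) = n * ρ + c := by field_simp
  have hdensity : ∀ N : ℕ, N ≠ 0 → ∀ J : ℝ, (N : ℝ) = J * ρ → ∀ u : ℝ,
      c ^ N / (Real.Gamma N * Real.Gamma (n * ρ / c + 1) / Real.Gamma (N + n * ρ / c + 1)) *
          u ^ (N - 1) * (1 + c * u) ^ (-((n / c + J) * ρ + 1)) =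
        (n * ρ + c) * baskakov c (n * ρ + c + c) (N - 1) u := by
    intro N hN J hJ u
    have hexp : (n / c + J) * ρ + 1 = n * ρ / c + 1 + N := by rw [hJ]; field_simp; ring
    rw [hexp, add_assoc, ← hcs, ← pow_div_beta_mul_eq_mul_baskakov hc.ne' hs hN]
  have hjρ : j * ρ ≠ 0 := by positivity
  simp_rw [hdensity (j * ρ) hjρ j (by push_cast; ring),
    hdensity ((j + 1) * ρ) (by positivity) (j + 1) (by push_cast; ring), ← mul_sub]
  rw [show (j + 1) * ρ - 1 = j * ρ - 1 + ρ by rw [add_mul, one_mul]; omega,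
    integral_mul_sub_baskakov hc.ne' _ _ _ (by positivity)]
  refine sum_congr rfl fun i _ => ?_
  rw [show j * ρ - 1 + i + 1 = i + j * ρ by omega]
  rfl
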